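/- arXiv:2006.16664 — 6 statements merged into one kernel-verified Lean document; each statement's English description precedes it below -/
import Mathlib

section
/- Let p be an L-Lipschitz-continuous probability density function on ℝ^d supported on the unit cube [0,1]^d that is strictly positive on [0,1]^d. Then for every positive integer n there exists a histogram density p̃ ∈ E[0,1]^d_n of resolution n such that TV(p, p̃) = (1/2)‖p − p̃‖_{L^1([0,1]^d)} ≤ L√d/(2n). -/
open MeasureTheory Matrix

/-- The closed unit cube `[0,1]^d` in `ℝ^d`. -/
def unitCube (d : ℕ) : Set (EuclideanSpace ℝ (Fin d)) := {x | ∀ i, x i ∈ Set.Icc (0:ℝ) 1}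

/-- The pdf of a `d`-dimensional histogram distribution of resolution `n` with weights `w`:
it equals `w k` on the cube `c_k = ∏_i [k i / n, (k i + 1)/n)`. -/
noncomputable def histPdf (d n : ℕ) (w : (Fin d → Fin n) → ℝ)
    (x : EuclideanSpace ℝ (Fin d)) : ℝ :=
  ∑ k : Fin d → Fin n, w k *
    Set.indicator (Set.univ.pi fun i => Set.Ico ((k i : ℝ) / n) (((k i : ℝ) + 1) / n))
      (fun _ => (1:ℝ)) (fun i => x i)

/-!
Give the cell `c_k` the weight `n^d ∫_{c_k} p`, i.e. the average of `p` over `c_k`. These weights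
are positive because `p` is, and they sum to `n^d ∫ p = n^d` because the cells tile the cube up to
a null set. Every cell has diameter `√d / n`, so on `c_k` the Lipschitz function `p` stays within
`L √d / n` of its average; integrating this over the cube bounds `‖p - p̃‖₁` by `L √d / n`.
-/

open Set Function
open scoped ENNReal NNReal

section Average

variable {α : Type*} [MeasurableSpace α] {μ : Measure α} {s : Set α} {f : α → ℝ}

lemma setAverage_pos (hs : MeasurableSet s) (h0 : μ s ≠ 0) (hμ : μ s ≠ ∞)
    (hf : IntegrableOn f s μ) (hpos : ∀ x ∈ s, 0 < f x) : 0 < ⨍ x in s, f x ∂μ := by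
  rw [setAverage_eq, smul_eq_mul]
  refine mul_pos (inv_pos.2 (ENNReal.toReal_pos h0 hμ)) ?_
  rw [setIntegral_pos_iff_support_of_nonneg_ae
      (ae_restrict_of_forall_mem hs fun x hx => (hpos x hx).le) hf,
    inter_eq_self_of_subset_right (s := support f) fun x hx => (hpos x hx).ne']
  exact pos_iff_ne_zero.2 h0

variable {C : ℝ}

lemma abs_sub_setAverage_le (hs : MeasurableSet s) (h0 : μ s ≠ 0) (hμ : μ s ≠ ∞)
    (hf : IntegrableOn f s μ) (hC : ∀ x ∈ s, ∀ y ∈ s, |f y - f x| ≤ C) {x : α} (hx : x ∈ s) :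
    |f x - ⨍ y in s, f y ∂μ| ≤ C := by
  have hmem : (⨍ y in s, f y ∂μ) ∈ Icc (f x - C) (f x + C) :=
    (convex_Icc _ _).set_average_mem isClosed_Icc h0 hμ
      (ae_restrict_of_forall_mem hs fun y hy => by
        have := abs_le.1 (hC x hx y hy)
        exact ⟨by linarith, by linarith⟩) hf
  exact abs_le.2 ⟨by linarith [hmem.2], by linarith [hmem.1]⟩

lemma setIntegral_abs_sub_setAverage_le (hs : MeasurableSet s) (h0 : μ s ≠ 0) (hμ : μ s ≠ ∞)
    (hf : IntegrableOn f s μ) (hC : ∀ x ∈ s, ∀ y ∈ s, |f y - f x| ≤ C) :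
    ∫ x in s, |f x - ⨍ y in s, f y ∂μ| ∂μ ≤ C * μ.real s := by
  have h := norm_setIntegral_le_of_norm_le_const hμ.lt_top fun x hx =>
    (Real.norm_of_nonneg (abs_nonneg _)).trans_le (abs_sub_setAverage_le hs h0 hμ hf hC hx)
  rwa [Real.norm_of_nonneg (integral_nonneg fun _ => abs_nonneg _)] at h

end Average

lemma EuclideanSpace.dist_le_sqrt_card_mul {ι : Type*} [Fintype ι] {x y : EuclideanSpace ℝ ι}
    {r : ℝ} (hr : 0 ≤ r) (h : ∀ i, dist (x i) (y i) ≤ r) :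
    dist x y ≤ √(Fintype.card ι) * r := by
  rw [EuclideanSpace.dist_eq, ← Real.sqrt_sq hr, ← Real.sqrt_mul (Nat.cast_nonneg _)]
  refine Real.sqrt_le_sqrt ?_
  calc ∑ i, dist (x i) (y i) ^ 2 ≤ ∑ _i : ι, r ^ 2 :=
        Finset.sum_le_sum fun i _ => pow_le_pow_left₀ dist_nonneg (h i) 2
    _ = Fintype.card ι * r ^ 2 := by simp

section Grid

variable {d n : ℕ}

lemma unitCube_eq_preimage_ofLp (d : ℕ) :
    unitCube d = WithLp.ofLp ⁻¹' univ.pi fun _ => Icc (0 : ℝ) 1 := by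
  ext x
  simp only [unitCube, mem_ofPred_eq, mem_preimage, mem_univ_pi]

lemma isCompact_unitCube (d : ℕ) : IsCompact (unitCube d) := by
  rw [unitCube_eq_preimage_ofLp]
  exact (PiLp.homeomorph 2 _).isCompact_preimage.2 (isCompact_univ_pi fun _ => isCompact_Icc)

lemma volume_unitCube (d : ℕ) : volume (unitCube d) = 1 := by
  rw [unitCube_eq_preimage_ofLp, (PiLp.volume_preserving_ofLp (Fin d)).measure_preimage
    (MeasurableSet.univ_pi fun _ => measurableSet_Icc).nullMeasurableSet, volume_pi_pi]
  simp

def gridCell (n : ℕ) (k : Fin d → Fin n) : Set (EuclideanSpace ℝ (Fin d)) :=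
  WithLp.ofLp ⁻¹' univ.pi fun i => Ico ((k i : ℝ) / n) (((k i : ℝ) + 1) / n)

lemma measurableSet_gridCell (k : Fin d → Fin n) : MeasurableSet (gridCell n k) :=
  (MeasurableSet.univ_pi fun _ => measurableSet_Ico).preimage (WithLp.measurable_ofLp 2 _)

lemma volume_gridCell (k : Fin d → Fin n) : volume (gridCell n k) = ((n : ℝ≥0∞)⁻¹) ^ d := by
  rw [gridCell, (PiLp.volume_preserving_ofLp (Fin d)).measure_preimage
    (MeasurableSet.univ_pi fun _ => measurableSet_Ico).nullMeasurableSet, volume_pi_pi]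
  have hside : ∀ i, volume (Ico ((k i : ℝ) / n) (((k i : ℝ) + 1) / n)) = (n : ℝ≥0∞)⁻¹ := by
    intro i
    rw [Real.volume_Ico, ← sub_div, add_sub_cancel_left, one_div,
      ENNReal.ofReal_inv_of_pos (Nat.cast_pos.2 (k i).pos), ENNReal.ofReal_natCast]
  simp [hside]

lemma volume_gridCell_ne_zero (k : Fin d → Fin n) : volume (gridCell n k) ≠ 0 := by
  simp [volume_gridCell]

lemma volume_gridCell_ne_top (hn : 0 < n) (k : Fin d → Fin n) : volume (gridCell n k) ≠ ∞ := by
  simp [volume_gridCell, hn.ne']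

lemma measureReal_gridCell (k : Fin d → Fin n) :
    volume.real (gridCell n k) = ((n : ℝ)⁻¹) ^ d := by
  simp [measureReal_def, volume_gridCell]

lemma gridCell_subset_unitCube (k : Fin d → Fin n) : gridCell n k ⊆ unitCube d := by
  intro x hx i
  have hn : (0 : ℝ) < n := Nat.cast_pos.2 (k i).pos
  have hk : (k i : ℝ) + 1 ≤ n := by exact_mod_cast (k i).isLt
  obtain ⟨hlo, hhi⟩ := hx i (mem_univ i)
  exact ⟨(by positivity : (0 : ℝ) ≤ (k i : ℝ) / n).trans hlo,
    hhi.le.trans ((div_le_one hn).2 hk)⟩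

lemma floor_eq_of_mem_gridCell {k : Fin d → Fin n} {x : EuclideanSpace ℝ (Fin d)}
    (hx : x ∈ gridCell n k) (i : Fin d) : ⌊n * x i⌋ = (k i : ℤ) := by
  have hn : (0 : ℝ) < n := Nat.cast_pos.2 (k i).pos
  obtain ⟨hlo, hhi⟩ := hx i (mem_univ i)
  rw [div_le_iff₀ hn] at hlo
  rw [lt_div_iff₀ hn] at hhi
  rw [Int.floor_eq_iff]
  push_cast
  constructor <;> linarith

lemma pairwise_disjoint_gridCell : Pairwise (Disjoint on gridCell (d := d) n) := by
  intro k k' hne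
  refine disjoint_left.2 fun x hx hx' => hne (funext fun i => Fin.ext ?_)
  exact_mod_cast (floor_eq_of_mem_gridCell hx i).symm.trans (floor_eq_of_mem_gridCell hx' i)

lemma dist_le_of_mem_gridCell {k : Fin d → Fin n} {x y : EuclideanSpace ℝ (Fin d)}
    (hx : x ∈ gridCell n k) (hy : y ∈ gridCell n k) : dist x y ≤ √d / n := by
  have hside : ∀ i, dist (x i) (y i) ≤ 1 / n := by
    intro i
    obtain ⟨hxlo, hxhi⟩ := hx i (mem_univ i)
    obtain ⟨hylo, hyhi⟩ := hy i (mem_univ i)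
    rw [add_div] at hxhi hyhi
    rw [Real.dist_eq, abs_le]
    constructor <;> linarith
  have h := EuclideanSpace.dist_le_sqrt_card_mul (x := x) (y := y) (by positivity) hside
  rwa [Fintype.card_fin, ← div_eq_mul_one_div] at h

lemma iUnion_gridCell_ae_eq_unitCube (hn : 0 < n) :
    (⋃ k : Fin d → Fin n, gridCell n k) =ᵐ[volume] unitCube d := by
  have hvol : volume (⋃ k : Fin d → Fin n, gridCell n k) = 1 := by
    rw [measure_iUnion pairwise_disjoint_gridCell measurableSet_gridCell, tsum_fintype]
    simp only [volume_gridCell, Finset.sum_const, Finset.card_univ, Fintype.card_fun,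
      Fintype.card_fin, nsmul_eq_mul, Nat.cast_pow, ← mul_pow]
    rw [ENNReal.mul_inv_cancel (by exact_mod_cast hn.ne') (ENNReal.natCast_ne_top n), one_pow]
  refine ae_eq_of_subset_of_measure_ge (iUnion_subset gridCell_subset_unitCube) ?_
    (MeasurableSet.iUnion measurableSet_gridCell).nullMeasurableSet ?_
  · rw [hvol, volume_unitCube]
  · rw [volume_unitCube]
    exact ENNReal.one_ne_top

lemma setIntegral_unitCube_eq_sum_gridCell (hn : 0 < n) {f : EuclideanSpace ℝ (Fin d) → ℝ}
    (hf : ∀ k, IntegrableOn f (gridCell n k)) :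
    ∫ x in unitCube d, f x = ∑ k, ∫ x in gridCell n k, f x := by
  rw [← setIntegral_congr_set (iUnion_gridCell_ae_eq_unitCube hn),
    integral_iUnion_fintype measurableSet_gridCell pairwise_disjoint_gridCell hf]

lemma histPdf_eq_of_mem_gridCell {w : (Fin d → Fin n) → ℝ} {k : Fin d → Fin n}
    {x : EuclideanSpace ℝ (Fin d)} (hx : x ∈ gridCell n k) : histPdf d n w x = w k := by
  rw [histPdf, Finset.sum_eq_single k]
  · rw [indicator_of_mem (s := univ.pi _) hx, mul_one]
  · intro k' _ hk'
    rw [indicator_of_notMem, mul_zero]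
    exact fun hx' => disjoint_left.1 (pairwise_disjoint_gridCell hk') hx' hx
  · exact fun h => absurd (Finset.mem_univ k) h

end Grid

lemma setIntegral_unitCube_abs_sub_histPdf {d n : ℕ} (hn : 0 < n)
    {f : EuclideanSpace ℝ (Fin d) → ℝ} (hf : IntegrableOn f (unitCube d))
    (w : (Fin d → Fin n) → ℝ) :
    ∫ x in unitCube d, |f x - histPdf d n w x| = ∑ k, ∫ x in gridCell n k, |f x - w k| := by
  have hcell : ∀ k, EqOn (fun x => |f x - histPdf d n w x|) (fun x => |f x - w k|)
      (gridCell n k) := fun k x hx => by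
    simp only [histPdf_eq_of_mem_gridCell hx]
  have hint : ∀ k, IntegrableOn (fun x => |f x - w k|) (gridCell n k) := fun k =>
    ((hf.mono_set (gridCell_subset_unitCube k)).sub
      (integrableOn_const (volume_gridCell_ne_top hn k))).abs
  rw [setIntegral_unitCube_eq_sum_gridCell hn fun k =>
    (hint k).congr_fun (hcell k).symm (measurableSet_gridCell k)]
  exact Finset.sum_congr rfl fun k _ => setIntegral_congr_fun (measurableSet_gridCell k) (hcell k)

theorem histogram_tv_approx_general (d : ℕ) (L : NNReal) (p : EuclideanSpace ℝ (Fin d) → ℝ)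
    (hLip : LipschitzOnWith L p (unitCube d))
    (hpos : ∀ x ∈ unitCube d, 0 < p x)
    (hint : ∫ x in unitCube d, p x = 1)
    (n : ℕ) (hn : 0 < n) :
    ∃ w : (Fin d → Fin n) → ℝ, (∀ k, 0 < w k) ∧ (∑ k, w k = (n:ℝ)^d) ∧
      (1/2) * ∫ x in unitCube d, |p x - histPdf d n w x| ≤ L * Real.sqrt d / (2*n) := by
  have hp : IntegrableOn p (unitCube d) :=
    hLip.continuousOn.integrableOn_compact (isCompact_unitCube d)
  have hpk (k : Fin d → Fin n) : IntegrableOn p (gridCell n k) :=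
    hp.mono_set (gridCell_subset_unitCube k)
  have hosc (k : Fin d → Fin n) :
      ∀ x ∈ gridCell n k, ∀ y ∈ gridCell n k, |p y - p x| ≤ L * (√d / n) := fun x hx y hy => by
    rw [← Real.dist_eq]
    exact (hLip.dist_le_mul y (gridCell_subset_unitCube k hy) x
      (gridCell_subset_unitCube k hx)).trans
      (mul_le_mul_of_nonneg_left (dist_le_of_mem_gridCell hy hx) L.coe_nonneg)
  refine ⟨fun k => ⨍ x in gridCell n k, p x, fun k => ?_, ?_, ?_⟩
  · exact setAverage_pos (measurableSet_gridCell k) (volume_gridCell_ne_zero k)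
      (volume_gridCell_ne_top hn k) (hpk k) fun x hx => hpos x (gridCell_subset_unitCube k hx)
  · simp only [setAverage_eq, measureReal_gridCell, smul_eq_mul, inv_pow, inv_inv,
      ← Finset.mul_sum]
    rw [← setIntegral_unitCube_eq_sum_gridCell hn hpk, hint, mul_one]
  · rw [setIntegral_unitCube_abs_sub_histPdf hn hp]
    calc (1/2) * ∑ k, ∫ x in gridCell n k, |p x - ⨍ y in gridCell n k, p y|
        ≤ (1/2) * ∑ _k : Fin d → Fin n, L * (√d / n) * ((n:ℝ)⁻¹) ^ d := by
          gcongr with k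
          rw [← measureReal_gridCell k]
          exact setIntegral_abs_sub_setAverage_le (measurableSet_gridCell k)
            (volume_gridCell_ne_zero k) (volume_gridCell_ne_top hn k) (hpk k) (hosc k)
      _ = L * √d / (2 * n) := by
          simp only [Finset.sum_const, Finset.card_univ, Fintype.card_fun, Fintype.card_fin,
            nsmul_eq_mul, Nat.cast_pow, inv_pow]
          field_simp

/-- Any `L`-Lipschitz probability density `p` supported on `[0,1]^d` and
strictly positive there can be approximated, in total variation distance, by a histogram
density of resolution `n` with error at most `L √d / (2n)`. -/
theorem histogram_tv_approx (d : ℕ) (L : NNReal) (p : EuclideanSpace ℝ (Fin d) → ℝ)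
    (hLip : LipschitzOnWith L p (unitCube d))
    (hsupp : ∀ x ∉ unitCube d, p x = 0)
    (hpos : ∀ x ∈ unitCube d, 0 < p x)
    (hint : ∫ x in unitCube d, p x = 1)
    (n : ℕ) (hn : 0 < n) :
    ∃ w : (Fin d → Fin n) → ℝ, (∀ k, 0 < w k) ∧ (∑ k, w k = (n:ℝ)^d) ∧
      (1/2) * ∫ x in unitCube d, |p x - histPdf d n w x| ≤ L * Real.sqrt d / (2*n) :=
  histogram_tv_approx_general d L p hLip hpos hint n hn
end

section
/- Let p_X be a probability density in G[0,1]^1_n with weights w_k, k ∈ {0,…,n−1}, and breakpoints 0 = t_0 < t_1 < ⋯ < t_n = 1. Define a_0 = 1/w_0, a_i = 1/w_i − 1/w_{i−1} for i ∈ {1,…,n−1}, b_0 = 0, and b_i = Σ_{j=0}^{i−1}(t_{j+1}−t_j)w_j for i ∈ {1,…,n}. Then the piecewise linear function f(x) = Σ_{i=0}^{n−1} a_i · max(0, x − b_i) satisfies f#U = p_X, i.e., the pushforward of the uniform distribution on [0,1] under f has density p_X. -/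
/-!
On `[t i, t (i+1)]` the histogram CDF `G` is affine with slope `w i`, running from `b i` to
`b (i+1)`; on `[b i, b (i+1)]` the hinge sum `f` is affine with slope `1 / w i`, running from
`t i` to `t (i+1)`, because the coefficients `a_j` telescope. Hence `f` and `G` are mutually
inverse increasing bijections of `[0, 1]`, so for uniform `U` we get
`P(f U ≤ x) = P(U ≤ G x) = G x`, and two finite measures on `ℝ` with the same distribution
function coincide.
-/

open MeasureTheory Matrix

/-- Uniform probability measure on the interval `[a, b]`. -/
noncomputable def uniformOnIcc (a b : ℝ) : Measure ℝ :=
  (ENNReal.ofReal (b - a))⁻¹ • volume.restrict (Set.Icc a b)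

/-- The pdf of a general one-dimensional histogram distribution with breakpoints `t` and
weights `w`: it equals `w k` on the interval `[t k, t (k+1))`. -/
noncomputable def genHistPdf (n : ℕ) (t w : ℕ → ℝ) (x : ℝ) : ℝ :=
  ∑ k ∈ Finset.range n, w k * (Set.Ico (t k) (t (k+1))).indicator (fun _ => (1:ℝ)) x


open Set

theorem Set.LeftInvOn.strictMonoOn {α β : Type*} [Preorder α] [LinearOrder β] {f : α → β}
    {g : β → α} {s : Set α} (h : LeftInvOn g f s) (hg : Monotone g) : StrictMonoOn f s := by
  intro a ha b hb hab
  by_contra hle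
  have := hg (not_lt.1 hle)
  rw [h ha, h hb] at this
  exact hab.not_ge this

theorem map_restrict_Icc_Iic_of_invOn {f G : ℝ → ℝ} (hf : Measurable f) (hG : Monotone G)
    (hinv : InvOn G f (Icc 0 1) (Icc 0 1)) (hG0 : ∀ x ≤ 0, G x = 0)
    (hG1 : ∀ x, 1 ≤ x → G x = 1) (x : ℝ) :
    (volume.restrict (Icc 0 1)).map f (Iic x) = ENNReal.ofReal (G x) := by
  have hGmem : ∀ x, G x ∈ Icc 0 1 := fun x =>
    ⟨hG0 _ (min_le_right x 0) ▸ hG (min_le_left x 0),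
      hG1 _ (le_max_right x 1) ▸ hG (le_max_left x 1)⟩
  have hGclamp : G (min x 1) = G x := by
    rcases le_total x 1 with h | h
    · rw [min_eq_left h]
    · rw [min_eq_right h, hG1 1 le_rfl, hG1 x h]
  -- `Ioc`, not `Icc`: for `x < 0` the point `y = 0` satisfies `y ≤ G x` but not `f y ≤ x`.
  have hset : f ⁻¹' Iic x ∩ Ioc 0 1 = Ioc 0 (G x) := by
    ext y
    simp only [mem_inter_iff, mem_preimage, mem_Iic, mem_Ioc]
    constructor
    · rintro ⟨hfy, hy0, hy1⟩
      exact ⟨hy0, hinv.1 ⟨hy0.le, hy1⟩ ▸ hG hfy⟩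
    · rintro ⟨hy0, hyG⟩
      refine ⟨?_, hy0, hyG.trans (hGmem x).2⟩
      rcases le_or_gt x 0 with hx | hx
      · linarith [hG0 x hx]
      · calc f y ≤ f (G (min x 1)) :=
              (hinv.1.strictMonoOn hG).monotoneOn ⟨hy0.le, hyG.trans (hGmem x).2⟩ (hGmem _)
                (hGclamp ▸ hyG)
          _ = min x 1 := hinv.2 ⟨le_min hx.le zero_le_one, min_le_right x 1⟩
          _ ≤ x := min_le_left x 1
  rw [Measure.map_apply hf measurableSet_Iic, ← Measure.restrict_congr_set Ioc_ae_eq_Icc,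
    Measure.restrict_apply (hf measurableSet_Iic), hset, Real.volume_Ioc, sub_zero]

theorem exists_mem_Icc_of_mem_Icc {α : Type*} [LinearOrder α] {s : ℕ → α} {n : ℕ}
    (hn : 0 < n) {x : α} (hx : x ∈ Icc (s 0) (s n)) :
    ∃ i < n, x ∈ Icc (s i) (s (i + 1)) := by
  induction n with
  | zero => exact absurd hn (lt_irrefl 0)
  | succ m ih =>
    rcases Nat.eq_zero_or_pos m with rfl | hm
    · exact ⟨0, Nat.one_pos, hx⟩
    rcases le_total x (s m) with h | h
    · obtain ⟨i, hi, hxi⟩ := ih hm ⟨hx.1, h⟩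
      exact ⟨i, by omega, hxi⟩
    · exact ⟨m, by omega, h, hx.2⟩

/-- `ramp a b x` is the length of `[a, b] ∩ (-∞, x]`. -/
noncomputable def ramp (a b x : ℝ) : ℝ := max 0 (min x b - a)

theorem ramp_nonneg (a b x : ℝ) : 0 ≤ ramp a b x := le_max_left _ _

theorem monotone_ramp (a b : ℝ) : Monotone (ramp a b) := fun _ _ h =>
  max_le_max le_rfl (sub_le_sub_right (min_le_min_right b h) a)

theorem ramp_of_le_left {a b x : ℝ} (h : x ≤ a) : ramp a b x = 0 :=
  max_eq_left (sub_nonpos.2 ((min_le_left x b).trans h))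

theorem ramp_of_mem_Icc {a b x : ℝ} (h : x ∈ Icc a b) : ramp a b x = x - a := by
  rw [ramp, min_eq_left h.2, max_eq_right (sub_nonneg.2 h.1)]

theorem ramp_of_right_le {a b x : ℝ} (hab : a ≤ b) (h : b ≤ x) : ramp a b x = b - a := by
  rw [ramp, min_eq_right h, max_eq_right (sub_nonneg.2 hab)]

theorem volume_Ico_inter_Iic (a b x : ℝ) :
    volume (Ico a b ∩ Iic x) = ENNReal.ofReal (ramp a b x) := by
  rw [← measure_congr ((ae_eq_refl (Ico a b)).inter Iio_ae_eq_Iic), Ico_inter_Iio,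
    Real.volume_Ico, ramp, ENNReal.ofReal_max, ENNReal.ofReal_zero, min_comm, zero_max]

section Histogram

variable {n : ℕ} {t w : ℕ → ℝ}

/-- The mass `b i` of the first `i` bins. -/
def histMass (t w : ℕ → ℝ) (i : ℕ) : ℝ :=
  ∑ j ∈ Finset.range i, (t (j + 1) - t j) * w j

noncomputable def histCDF (n : ℕ) (t w : ℕ → ℝ) (x : ℝ) : ℝ :=
  ∑ k ∈ Finset.range n, w k * ramp (t k) (t (k + 1)) x

/-- The coefficient `a i`: the change of slope of the quantile function at `b i`. -/
noncomputable def quantileSlopeJump (w : ℕ → ℝ) (i : ℕ) : ℝ :=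
  if i = 0 then 1 / w 0 else 1 / w i - 1 / w (i - 1)

noncomputable def histQuantile (n : ℕ) (t w : ℕ → ℝ) (y : ℝ) : ℝ :=
  ∑ i ∈ Finset.range n, quantileSlopeJump w i * max 0 (y - histMass t w i)

theorem histMass_zero : histMass t w 0 = 0 := Finset.sum_range_zero _

theorem histMass_succ (i : ℕ) :
    histMass t w (i + 1) = histMass t w i + (t (i + 1) - t i) * w i :=
  Finset.sum_range_succ _ _

theorem histMass_eq_one (hsum : ∑ k ∈ Finset.range n, w k * (t (k + 1) - t k) = 1) :
    histMass t w n = 1 :=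
  hsum ▸ Finset.sum_congr rfl fun _ _ => mul_comm _ _

theorem strictMonoOn_histMass (ht : ∀ k < n, t k < t (k + 1)) (hw : ∀ k < n, 0 < w k) :
    StrictMonoOn (histMass t w) (Iic n) :=
  strictMonoOn_Iic_of_lt_succ fun k hk => by
    rw [Order.succ_eq_add_one, histMass_succ]
    exact lt_add_of_pos_right _ (mul_pos (sub_pos.2 (ht k hk)) (hw k hk))

theorem monotone_histCDF (hw : ∀ k < n, 0 ≤ w k) : Monotone (histCDF n t w) := fun _ _ h =>
  Finset.sum_le_sum fun k hk =>
    mul_le_mul_of_nonneg_left (monotone_ramp _ _ h) (hw k (Finset.mem_range.1 hk))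

theorem histCDF_eq_of_mem_Icc (ht : ∀ k < n, t k < t (k + 1)) {i : ℕ} (hi : i < n) {x : ℝ}
    (hx : x ∈ Icc (t i) (t (i + 1))) :
    histCDF n t w x = histMass t w i + (x - t i) * w i := by
  have htm : MonotoneOn t (Iic n) := (strictMonoOn_Iic_of_lt_succ ht).monotoneOn
  have hbelow : ∀ k ∈ Finset.range i,
      w k * ramp (t k) (t (k + 1)) x = (t (k + 1) - t k) * w k := by
    intro k hk
    have hk := Finset.mem_range.1 hk
    rw [ramp_of_right_le (ht k (by omega)).le
      ((htm (mem_Iic.2 (by omega)) (mem_Iic.2 hi.le) hk).trans hx.1), mul_comm]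
  have habove : ∀ k ∈ Finset.Ico (i + 1) n, w k * ramp (t k) (t (k + 1)) x = 0 := by
    intro k hk
    have hk := Finset.mem_Ico.1 hk
    rw [ramp_of_le_left (hx.2.trans (htm (mem_Iic.2 hi) (mem_Iic.2 hk.2.le) hk.1)), mul_zero]
  rw [histCDF, ← Finset.sum_range_add_sum_Ico _ hi, Finset.sum_eq_zero habove,
    Finset.sum_range_succ, Finset.sum_congr rfl hbelow, ramp_of_mem_Icc hx, histMass]
  ring

theorem sum_quantileSlopeJump_mul (ht0 : t 0 = 0) {i : ℕ} (hw : ∀ k ≤ i, w k ≠ 0)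
    (y : ℝ) :
    ∑ j ∈ Finset.range (i + 1), quantileSlopeJump w j * (y - histMass t w j)
      = t i + (y - histMass t w i) / w i := by
  induction i with
  | zero => simp [quantileSlopeJump, histMass_zero, ht0, div_eq_inv_mul]
  | succ i ih =>
    rw [Finset.sum_range_succ, ih fun k hk => hw k (by omega), histMass_succ]
    have := hw i (by omega)
    have := hw (i + 1) le_rfl
    simp only [quantileSlopeJump, Nat.add_one_ne_zero, if_false, Nat.add_sub_cancel]
    field_simp
    ring

theorem histQuantile_eq_of_mem_Icc (ht0 : t 0 = 0) (ht : ∀ k < n, t k < t (k + 1))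
    (hw : ∀ k < n, 0 < w k) {i : ℕ} (hi : i < n) {y : ℝ}
    (hy : y ∈ Icc (histMass t w i) (histMass t w (i + 1))) :
    histQuantile n t w y = t i + (y - histMass t w i) / w i := by
  have hbm : MonotoneOn (histMass t w) (Iic n) := (strictMonoOn_histMass ht hw).monotoneOn
  have hbelow : ∀ j ∈ Finset.range (i + 1), quantileSlopeJump w j * max 0 (y - histMass t w j)
      = quantileSlopeJump w j * (y - histMass t w j) := by
    intro j hj
    have hj := Finset.mem_range.1 hj
    rw [max_eq_right (sub_nonneg.2 ((hbm (mem_Iic.2 (by omega)) (mem_Iic.2 hi.le)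
      (by omega)).trans hy.1))]
  have habove : ∀ j ∈ Finset.Ico (i + 1) n,
      quantileSlopeJump w j * max 0 (y - histMass t w j) = 0 := by
    intro j hj
    have hj := Finset.mem_Ico.1 hj
    rw [max_eq_left (sub_nonpos.2 (hy.2.trans (hbm (mem_Iic.2 hi) (mem_Iic.2 hj.2.le) hj.1))),
      mul_zero]
  rw [histQuantile, ← Finset.sum_range_add_sum_Ico _ hi, Finset.sum_eq_zero habove, add_zero,
    Finset.sum_congr rfl hbelow, sum_quantileSlopeJump_mul ht0 fun k hk => (hw k (by omega)).ne']

theorem histCDF_of_nonpos (ht0 : t 0 = 0) (ht : ∀ k < n, t k < t (k + 1)) {x : ℝ}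
    (hx : x ≤ 0) :
    histCDF n t w x = 0 := by
  have htm : MonotoneOn t (Iic n) := (strictMonoOn_Iic_of_lt_succ ht).monotoneOn
  refine Finset.sum_eq_zero fun k hk => ?_
  have ht0k : t 0 ≤ t k :=
    htm (mem_Iic.2 (Nat.zero_le n)) (mem_Iic.2 (Finset.mem_range.1 hk).le) (Nat.zero_le k)
  rw [ramp_of_le_left (hx.trans (ht0 ▸ ht0k)), mul_zero]

theorem histCDF_of_one_le (htn : t n = 1) (ht : ∀ k < n, t k < t (k + 1))
    (hsum : ∑ k ∈ Finset.range n, w k * (t (k + 1) - t k) = 1) {x : ℝ} (hx : 1 ≤ x) :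
    histCDF n t w x = 1 := by
  have htm : MonotoneOn t (Iic n) := (strictMonoOn_Iic_of_lt_succ ht).monotoneOn
  rw [← hsum]
  refine Finset.sum_congr rfl fun k hk => ?_
  have hk := Finset.mem_range.1 hk
  rw [ramp_of_right_le (ht k hk).le ((htm (mem_Iic.2 hk) (mem_Iic.2 le_rfl) hk).trans (htn ▸ hx))]

theorem histCDF_histQuantile (hn : 0 < n) (ht0 : t 0 = 0) (ht : ∀ k < n, t k < t (k + 1))
    (hw : ∀ k < n, 0 < w k) (hsum : ∑ k ∈ Finset.range n, w k * (t (k + 1) - t k) = 1) :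
    LeftInvOn (histCDF n t w) (histQuantile n t w) (Icc 0 1) := by
  intro y hy
  rw [← histMass_zero (t := t) (w := w), ← histMass_eq_one hsum] at hy
  obtain ⟨i, hi, hyi⟩ := exists_mem_Icc_of_mem_Icc hn hy
  have hwi := hw i hi
  have hf := histQuantile_eq_of_mem_Icc ht0 ht hw hi hyi
  have hmem : histQuantile n t w y ∈ Icc (t i) (t (i + 1)) := by
    rw [hf]
    constructor
    · linarith [div_nonneg (sub_nonneg.2 hyi.1) hwi.le]
    · rw [← le_sub_iff_add_le', div_le_iff₀ hwi]
      linarith [hyi.2, histMass_succ (t := t) (w := w) i]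
  rw [histCDF_eq_of_mem_Icc ht hi hmem, hf]
  field_simp
  ring

theorem histQuantile_histCDF (hn : 0 < n) (ht0 : t 0 = 0) (htn : t n = 1)
    (ht : ∀ k < n, t k < t (k + 1)) (hw : ∀ k < n, 0 < w k) :
    LeftInvOn (histQuantile n t w) (histCDF n t w) (Icc 0 1) := by
  intro x hx
  rw [← ht0, ← htn] at hx
  obtain ⟨i, hi, hxi⟩ := exists_mem_Icc_of_mem_Icc hn hx
  have hwi := hw i hi
  have hG := histCDF_eq_of_mem_Icc (w := w) ht hi hxi
  have hmem : histCDF n t w x ∈ Icc (histMass t w i) (histMass t w (i + 1)) := by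
    rw [hG, histMass_succ]
    constructor <;> nlinarith [hxi.1, hxi.2]
  rw [histQuantile_eq_of_mem_Icc ht0 ht hw hi hmem, hG]
  field_simp
  ring

theorem withDensity_genHistPdf_Iic (hw : ∀ k < n, 0 ≤ w k) (x : ℝ) :
    volume.withDensity (fun y => ENNReal.ofReal (genHistPdf n t w y)) (Iic x)
      = ENNReal.ofReal (histCDF n t w x) := by
  have hpdf : ∀ y, ENNReal.ofReal (genHistPdf n t w y)
      = ∑ k ∈ Finset.range n,
          (Ico (t k) (t (k + 1))).indicator (fun _ => ENNReal.ofReal (w k)) y := by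
    intro y
    rw [genHistPdf, ENNReal.ofReal_sum_of_nonneg fun k hk =>
      mul_nonneg (hw k (Finset.mem_range.1 hk)) (indicator_nonneg (fun _ _ => zero_le_one) y)]
    refine Finset.sum_congr rfl fun k _ => ?_
    by_cases hy : y ∈ Ico (t k) (t (k + 1)) <;> simp [hy]
  simp_rw [withDensity_apply _ measurableSet_Iic, hpdf]
  rw [lintegral_finsetSum _ fun k _ => measurable_const.indicator measurableSet_Ico,
    histCDF, ENNReal.ofReal_sum_of_nonneg fun k hk =>
      mul_nonneg (hw k (Finset.mem_range.1 hk)) (ramp_nonneg _ _ x)]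
  refine Finset.sum_congr rfl fun k hk => ?_
  rw [lintegral_indicator measurableSet_Ico, setLIntegral_const,
    Measure.restrict_apply measurableSet_Ico, volume_Ico_inter_Iic,
    ENNReal.ofReal_mul (hw k (Finset.mem_range.1 hk))]

end Histogram

/-- For a general histogram density with weights `w` and breakpoints `t`,
the piecewise linear function `f(x) = ∑_i a_i max(0, x - b_i)` with `a_0 = 1/w_0`,
`a_i = 1/w_i - 1/w_{i-1}`, `b_0 = 0`, `b_i = ∑_{j<i} (t_{j+1} - t_j) w_j` pushes the uniform
distribution on `[0,1]` forward to that histogram density. -/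
theorem plf_pushforward (n : ℕ) (hn : 0 < n) (t w : ℕ → ℝ)
    (ht0 : t 0 = 0) (htn : t n = 1) (htmono : ∀ k < n, t k < t (k+1))
    (hw : ∀ k < n, 0 < w k)
    (hsum : ∑ k ∈ Finset.range n, w k * (t (k+1) - t k) = 1)
    (f : ℝ → ℝ)
    (hf : ∀ y, f y = ∑ i ∈ Finset.range n,
      (if i = 0 then 1 / w 0 else 1 / w i - 1 / w (i-1)) *
        max 0 (y - ∑ j ∈ Finset.range i, (t (j+1) - t j) * w j)) :
    Measure.map f (uniformOnIcc 0 1)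
      = volume.withDensity fun y => ENNReal.ofReal (genHistPdf n t w y) := by
  obtain rfl : f = histQuantile n t w := funext hf
  have hw₀ : ∀ k < n, 0 ≤ w k := fun k hk => (hw k hk).le
  have hU : uniformOnIcc 0 1 = volume.restrict (Icc 0 1) := by simp [uniformOnIcc]
  have hmeas : Measurable (histQuantile n t w) := by unfold histQuantile; fun_prop
  have hinv : InvOn (histCDF n t w) (histQuantile n t w) (Icc 0 1) (Icc 0 1) :=
    ⟨histCDF_histQuantile hn ht0 htmono hw hsum, histQuantile_histCDF hn ht0 htn htmono hw⟩
  rw [hU]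
  refine Measure.ext_of_Iic _ _ fun x => ?_
  rw [map_restrict_Icc_Iic_of_invOn hmeas (monotone_histCDF hw₀) hinv
    (fun _ hx => histCDF_of_nonpos ht0 htmono hx)
    (fun _ hx => histCDF_of_one_le htn htmono hsum hx),
    withDensity_genHistPdf_Iic hw₀]
end

section
/- Let p_X ∈ G[0,1]^1_n have weights w_k and breakpoints 0 = t_0 < ⋯ < t_n = 1, and let f(x) = Σ_{i=0}^{n−1} a_i · max(0, x − b_i) with a_0 = 1/w_0, a_i = 1/w_i − 1/w_{i−1}, b_0 = 0, b_i = Σ_{j=0}^{i−1}(t_{j+1}−t_j)w_j. Then for each i ∈ {0,…,n−1}, f is affine on the interval I_i = [b_i, b_{i+1}] with slope 1/w_i, and f maps I_i onto the interval [t_i, t_{i+1}]; moreover ∪_{i=0}^{n−1} I_i = [0,1]. -/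
/-!
The numbers `b i` are the values at the breakpoints `t i` of the distribution function of the
histogram density, and `f` is its quantile function written as a sum of hinges
`y ↦ max 0 (y - b i)`. On `[b i, b (i+1)]` exactly the hinges `j ≤ i` are active; their
coefficients are the successive slope increments, so they add up to the slope `1 / w i`, and the
intercept telescopes to `t i` because `b (j+1) - b j = (t (j+1) - t j) * w j`.
-/

open Finset

lemma monotoneOn_Iic_of_le_add_one {α : Type*} [Preorder α] {b : ℕ → α} {n : ℕ}
    (h : ∀ i < n, b i ≤ b (i + 1)) : MonotoneOn b (Set.Iic n) :=
  monotoneOn_of_le_add_one Set.ordConnected_Iic fun i _ _ hi => h i hi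

lemma biUnion_range_Icc_eq_Icc {α : Type*} [LinearOrder α] {b : ℕ → α} {n : ℕ} (hn : 0 < n)
    (hb : MonotoneOn b (Set.Iic n)) :
    ⋃ i ∈ range n, Set.Icc (b i) (b (i + 1)) = Set.Icc (b 0) (b n) := by
  induction n, hn using Nat.le_induction with
  | base => simp
  | succ m hm ih =>
    have hb' : MonotoneOn b (Set.Iic m) := hb.mono (Set.Iic_subset_Iic.mpr m.le_succ)
    rw [range_add_one, set_biUnion_insert, ih hb', Set.union_comm,
      Set.Icc_union_Icc_eq_Icc (hb' (by simp) (by simp) (Nat.zero_le m))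
        (hb (by simp) (by simp) m.le_succ)]

lemma sum_mul_max_sub_of_mem_Icc {a b : ℕ → ℝ} {n i : ℕ} (hi : i < n)
    (hb : MonotoneOn b (Set.Iic n)) {y : ℝ} (hy : y ∈ Set.Icc (b i) (b (i + 1))) :
    ∑ j ∈ range n, a j * max 0 (y - b j) = ∑ j ∈ range (i + 1), a j * (y - b j) := by
  have hbi : MonotoneOn b (Set.Iic (i + 1)) := hb.mono (Set.Iic_subset_Iic.mpr hi)
  calc ∑ j ∈ range n, a j * max 0 (y - b j)
      = ∑ j ∈ range (i + 1), a j * max 0 (y - b j) := by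
        refine (sum_subset (range_subset_range.mpr hi) fun j hjn hji => ?_).symm
        simp only [mem_range, not_lt] at hjn hji
        have : b (i + 1) ≤ b j := hb (Set.mem_Iic.mpr (by omega)) (Set.mem_Iic.mpr hjn.le) hji
        rw [max_eq_left (by linarith [hy.2]), mul_zero]
    _ = ∑ j ∈ range (i + 1), a j * (y - b j) := sum_congr rfl fun j hj => by
        rw [mem_range] at hj
        have : b j ≤ b i :=
          hbi (Set.mem_Iic.mpr (by omega)) (Set.mem_Iic.mpr i.le_succ) (Nat.lt_succ_iff.mp hj)
        rw [max_eq_right (by linarith [hy.1])]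

section Histogram

variable {t w b : ℕ → ℝ} (hb : ∀ i, b i = ∑ j ∈ range i, (t (j + 1) - t j) * w j)
include hb

lemma cdf_succ (i : ℕ) : b (i + 1) = b i + (t (i + 1) - t i) * w i := by
  rw [hb, hb, sum_range_succ]

lemma sum_slope_increments_mul_sub (ht0 : t 0 = 0) (i : ℕ) (hw : ∀ j ≤ i, w j ≠ 0)
    (y : ℝ) :
    ∑ j ∈ range (i + 1), (if j = 0 then 1 / w 0 else 1 / w j - 1 / w (j - 1)) * (y - b j)
      = t i + (y - b i) / w i := by
  induction i with
  | zero =>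
    rw [sum_range_one, if_pos rfl, hb 0, sum_range_zero, ht0]
    ring
  | succ k ih =>
    have hwk := hw k k.le_succ
    have hwk1 := hw (k + 1) le_rfl
    rw [sum_range_succ, ih fun j hj => hw j (hj.trans k.le_succ), if_neg k.succ_ne_zero,
      Nat.add_sub_cancel, cdf_succ hb]
    field_simp
    ring

end Histogram

lemma image_add_sub_div_Icc {c d β ω : ℝ} (hω : 0 < ω) :
    (fun y => c + (y - β) / ω) '' Set.Icc β (β + (d - c) * ω) = Set.Icc c d := by
  have hω' := hω.ne'
  have : (fun y => c + (y - β) / ω) = (ω⁻¹ * · + (c - β / ω)) := by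
    funext y
    field_simp
    ring
  rw [this, Set.image_affine_Icc' (inv_pos.mpr hω)]
  congr 1 <;> field_simp <;> ring

theorem plf_structure_general (n : ℕ) (hn : 0 < n) (t w : ℕ → ℝ)
    (ht0 : t 0 = 0) (htmono : ∀ k < n, t k < t (k+1))
    (hw : ∀ k < n, 0 < w k)
    (hsum : ∑ k ∈ Finset.range n, w k * (t (k+1) - t k) = 1)
    (b : ℕ → ℝ) (hb : ∀ i, b i = ∑ j ∈ Finset.range i, (t (j+1) - t j) * w j)
    (f : ℝ → ℝ)
    (hf : ∀ y, f y = ∑ i ∈ Finset.range n,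
      (if i = 0 then 1 / w 0 else 1 / w i - 1 / w (i-1)) * max 0 (y - b i)) :
    (∀ i < n, ∀ y ∈ Set.Icc (b i) (b (i+1)), f y = t i + (y - b i) / w i) ∧
    (∀ i < n, f '' Set.Icc (b i) (b (i+1)) = Set.Icc (t i) (t (i+1))) ∧
    (⋃ i ∈ Finset.range n, Set.Icc (b i) (b (i+1))) = Set.Icc (0:ℝ) 1 := by
  have hb_mono : MonotoneOn b (Set.Iic n) := monotoneOn_Iic_of_le_add_one fun i hi => by
    rw [cdf_succ hb]
    linarith [mul_pos (sub_pos.mpr (htmono i hi)) (hw i hi)]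
  have hf_affine :
      ∀ i < n, Set.EqOn f (fun y => t i + (y - b i) / w i) (Set.Icc (b i) (b (i+1))) :=
    fun i hi y hy => by
      rw [hf, sum_mul_max_sub_of_mem_Icc hi hb_mono hy,
        sum_slope_increments_mul_sub hb ht0 i fun j hj => (hw j (by omega)).ne']
  have hb_zero : b 0 = 0 := by simp [hb]
  have hb_n : b n = 1 := by simp_rw [hb, ← hsum, mul_comm]
  refine ⟨hf_affine, fun i hi => ?_, ?_⟩
  · rw [(hf_affine i hi).image_eq, cdf_succ hb, image_add_sub_div_Icc (hw i hi)]
  · rw [biUnion_range_Icc_eq_Icc hn hb_mono, hb_zero, hb_n]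

/-- With `f`, `a_i`, `b_i` as in the explicit construction for a general
histogram density with weights `w` and breakpoints `t`: on each interval `I_i = [b_i, b_{i+1}]`
the function `f` is affine with slope `1/w_i` (explicitly `f x = t_i + (x - b_i)/w_i`), maps
`I_i` onto `[t_i, t_{i+1}]`, and the `I_i` cover `[0,1]`. -/
theorem plf_structure (n : ℕ) (hn : 0 < n) (t w : ℕ → ℝ)
    (ht0 : t 0 = 0) (htn : t n = 1) (htmono : ∀ k < n, t k < t (k+1))
    (hw : ∀ k < n, 0 < w k)
    (hsum : ∑ k ∈ Finset.range n, w k * (t (k+1) - t k) = 1)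
    (b : ℕ → ℝ) (hb : ∀ i, b i = ∑ j ∈ Finset.range i, (t (j+1) - t j) * w j)
    (f : ℝ → ℝ)
    (hf : ∀ y, f y = ∑ i ∈ Finset.range n,
      (if i = 0 then 1 / w 0 else 1 / w i - 1 / w (i-1)) * max 0 (y - b i)) :
    (∀ i < n, ∀ y ∈ Set.Icc (b i) (b (i+1)), f y = t i + (y - b i) / w i) ∧
    (∀ i < n, f '' Set.Icc (b i) (b (i+1)) = Set.Icc (t i) (t (i+1))) ∧
    (⋃ i ∈ Finset.range n, Set.Icc (b i) (b (i+1))) = Set.Icc (0:ℝ) 1 :=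
  plf_structure_general n hn t w ht0 htmono hw hsum b hb f hf
end

section
/- Let g: [0,1] → [0,1] be the sawtooth function g(x) = 2x for x < 1/2 and g(x) = 2(1−x) for x ≥ 1/2 (extended by 0 outside [0,1]), and let g_s denote the s-fold composition of g with itself. Then for every s ≥ 1 and all x ∈ [0,1], g_s(x) = Σ_{k=0}^{2^{s−1}−1} g(2^{s−1}x − k), and for each k ∈ {0,…,2^{s−1}−1} the function x ↦ g(2^{s−1}x − k) is supported in (k/2^{s−1}, (k+1)/2^{s−1}). -/
open MeasureTheory Matrix

/-- The sawtooth function `g`: `g x = 2 x` for `0 ≤ x < 1/2`, `g x = 2 (1 - x)` for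
`1/2 ≤ x ≤ 1`, and `g x = 0` outside `[0, 1]`. -/
noncomputable def saw (x : ℝ) : ℝ :=
  if x < 0 then 0 else if x < 1/2 then 2 * x else if x ≤ 1 then 2 * (1 - x) else 0

/-- `sawIter s` is the `s`-fold composition `g_s = g ∘ g ∘ ⋯ ∘ g` of the sawtooth function
(with `sawIter 0 = id`, `sawIter 1 = g`). -/
noncomputable def sawIter : ℕ → ℝ → ℝ
  | 0, x => x
  | s + 1, x => saw (sawIter s x)

/-!
On `[0, 1/2]` the sawtooth is `x ↦ 2x`, and on `[1/2, 1]` it is `x ↦ 2(1 - x)`, while `g` is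
symmetric about `1/2`. Hence if `g_n` is the sum of the `m = 2^(n-1)` tents `g(m y - k)`,
substituting `y = g x` stretches these tents onto `[0, 1/2]` for `x ≤ 1/2` and, reflected, onto
`[1/2, 1]` for `x ≥ 1/2`; together they are the `2m` tents `g(2m x - k)`, which gives the
decomposition of `g_(n+1) = g_n ∘ g` by induction on `n`.
-/

lemma saw_of_nonneg_of_lt_half {x : ℝ} (h₀ : 0 ≤ x) (h : x < 1 / 2) : saw x = 2 * x := by
  unfold saw; split_ifs <;> linarith

lemma saw_of_half_le_of_le_one {x : ℝ} (h : 1 / 2 ≤ x) (h₁ : x ≤ 1) : saw x = 2 * (1 - x) := by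
  unfold saw; split_ifs <;> linarith

lemma saw_of_nonpos {x : ℝ} (h : x ≤ 0) : saw x = 0 := by
  unfold saw; split_ifs <;> linarith

lemma saw_of_one_le {x : ℝ} (h : 1 ≤ x) : saw x = 0 := by
  unfold saw; split_ifs <;> linarith

lemma saw_one_sub (x : ℝ) : saw (1 - x) = saw x := by
  unfold saw; split_ifs <;> linarith

lemma saw_mem_Icc {x : ℝ} (hx : x ∈ Set.Icc (0 : ℝ) 1) : saw x ∈ Set.Icc (0 : ℝ) 1 := by
  obtain ⟨h₀, h₁⟩ := hx
  unfold saw; split_ifs <;> constructor <;> linarith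

lemma support_saw_subset : Function.support saw ⊆ Set.Ioo 0 1 := fun _ hx =>
  ⟨lt_of_not_ge fun h => hx (saw_of_nonpos h), lt_of_not_ge fun h => hx (saw_of_one_le h)⟩

lemma support_saw_affine_subset {a : ℝ} (ha : 0 < a) (b : ℝ) :
    Function.support (fun x => saw (a * x - b)) ⊆ Set.Ioo (b / a) ((b + 1) / a) := by
  intro x hx
  obtain ⟨h₀, h₁⟩ := support_saw_subset hx
  constructor
  · rw [div_lt_iff₀ ha]; linarith
  · rw [lt_div_iff₀ ha]; linarith

lemma sawIter_eq_iterate (n : ℕ) : sawIter n = saw^[n] := by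
  induction n with
  | zero => rfl
  | succ n ih => funext x; rw [Function.iterate_succ_apply', ← ih]; rfl

lemma sum_saw_of_lt_half (m : ℕ) {x : ℝ} (h₀ : 0 ≤ x) (h : x < 1 / 2) :
    ∑ k ∈ Finset.range m, saw (m * saw x - k)
      = ∑ k ∈ Finset.range (2 * m), saw (2 * m * x - k) := by
  have upper_zero : ∀ k ∈ Finset.range m, saw (2 * m * x - (m + k : ℕ)) = 0 := fun k _ => by
    apply saw_of_nonpos
    push_cast
    nlinarith [(k.cast_nonneg : (0 : ℝ) ≤ k), (m.cast_nonneg : (0 : ℝ) ≤ m)]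
  rw [two_mul m, Finset.sum_range_add, Finset.sum_congr rfl upper_zero, Finset.sum_const_zero,
    add_zero, saw_of_nonneg_of_lt_half h₀ h]
  ring_nf

lemma sum_saw_of_half_le (m : ℕ) {x : ℝ} (h : 1 / 2 ≤ x) (h₁ : x ≤ 1) :
    ∑ k ∈ Finset.range m, saw (m * saw x - k)
      = ∑ k ∈ Finset.range (2 * m), saw (2 * m * x - k) := by
  have lower_zero : ∀ k ∈ Finset.range m, saw (2 * m * x - k) = 0 := fun k hk => by
    have hkm : (k : ℝ) + 1 ≤ m := by exact_mod_cast Finset.mem_range.mp hk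
    apply saw_of_one_le
    nlinarith
  rw [two_mul m, Finset.sum_range_add, Finset.sum_congr rfl lower_zero, Finset.sum_const_zero,
    zero_add, saw_of_half_le_of_le_one h h₁,
    ← Finset.sum_range_reflect (fun k => saw (m * (2 * (1 - x)) - k))]
  refine Finset.sum_congr rfl fun k hk => ?_
  have hkm : k + 1 ≤ m := Finset.mem_range.mp hk
  -- the tent of index `m - 1 - k` of `g_n ∘ g` is the mirror image of the tent of index `m + k`
  have hcast : ((m - 1 - k : ℕ) : ℝ) = m - 1 - k := by
    rw [show m - 1 - k = m - (k + 1) by omega, Nat.cast_sub hkm]; push_cast; ring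
  rw [hcast, ← saw_one_sub]
  push_cast
  ring_nf

lemma sum_saw_comp_saw {x : ℝ} (hx : x ∈ Set.Icc (0 : ℝ) 1) (m : ℕ) :
    ∑ k ∈ Finset.range m, saw (m * saw x - k)
      = ∑ k ∈ Finset.range (2 * m), saw (2 * m * x - k) := by
  rcases lt_or_ge x (1 / 2) with h | h
  · exact sum_saw_of_lt_half m hx.1 h
  · exact sum_saw_of_half_le m h hx.2

lemma sawIter_succ_eq_sum (n : ℕ) {x : ℝ} (hx : x ∈ Set.Icc (0 : ℝ) 1) :
    sawIter (n + 1) x = ∑ k ∈ Finset.range (2 ^ n), saw (2 ^ n * x - k) := by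
  induction n generalizing x with
  | zero => simp [sawIter]
  | succ n ih =>
    have h := sum_saw_comp_saw hx (2 ^ n)
    push_cast at h
    rw [sawIter_eq_iterate, Function.iterate_succ_apply, ← sawIter_eq_iterate,
      ih (saw_mem_Icc hx), h]
    simp only [pow_succ']

/-- For every `s ≥ 1`, the `s`-fold sawtooth `g_s` satisfies, on `[0,1]`,
`g_s(x) = ∑_{k=0}^{2^{s-1}-1} g(2^{s-1} x - k)`, and each summand `x ↦ g(2^{s-1} x - k)` is
supported in `(k/2^{s-1}, (k+1)/2^{s-1})`. -/
theorem sawtooth_decomposition (s : ℕ) (hs : 1 ≤ s) :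
    (∀ x ∈ Set.Icc (0:ℝ) 1,
      sawIter s x = ∑ k ∈ Finset.range (2^(s-1)), saw ((2:ℝ)^(s-1) * x - k)) ∧
    (∀ k < 2^(s-1),
      Function.support (fun x : ℝ => saw ((2:ℝ)^(s-1) * x - k)) ⊆
        Set.Ioo ((k:ℝ)/2^(s-1)) (((k:ℝ)+1)/2^(s-1))) := by
  obtain ⟨n, rfl⟩ : ∃ n, s = n + 1 := ⟨s - 1, by omega⟩
  rw [Nat.add_sub_cancel]
  exact ⟨fun x hx => sawIter_succ_eq_sum n hx,
    fun k _ => support_saw_affine_subset (by positivity) k⟩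
end

section
/- Let f be a continuous function on [0,1] with f(0) = 0, let g be the sawtooth function and g_s its s-fold composition. Then for all s ∈ ℕ and all x ∈ [0,1], f(g_s(x)) = Σ_{k=0}^{2^{s−1}−1} f(g(2^{s−1}x − k)), and for all k ∈ {0,…,2^{s−1}−1}, the support of x ↦ f(g(2^{s−1}x − k)) is contained in (k/2^{s−1}, (k+1)/2^{s−1}). -/
open MeasureTheory Matrix

lemma saw_eq_zero {t : ℝ} (h : t ≤ 0 ∨ 1 ≤ t) : saw t = 0 := by
  unfold saw
  rcases h with h | h <;> split_ifs <;> first | rfl | linarith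

lemma saw_pos_of_ne_zero {t : ℝ} (h : saw t ≠ 0) : 0 < t ∧ t < 1 := by
  constructor
  · by_contra h'; push_neg at h'; exact h (saw_eq_zero (Or.inl h'))
  · by_contra h'; push_neg at h'; exact h (saw_eq_zero (Or.inr h'))

lemma saw_mem {x : ℝ} (hx : x ∈ Set.Icc (0:ℝ) 1) : saw x ∈ Set.Icc (0:ℝ) 1 := by
  obtain ⟨h0, h1⟩ := hx
  unfold saw
  split_ifs <;> constructor <;> linarith

lemma saw_symm {u : ℝ} (h0 : 0 ≤ u) (h1 : u ≤ 1) : saw (1 - u) = saw u := by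
  unfold saw
  split_ifs <;> linarith

lemma saw_of_lt_half {x : ℝ} (h0 : 0 ≤ x) (h : x < 1/2) : saw x = 2 * x := by
  unfold saw
  split_ifs <;> linarith

lemma saw_of_ge_half {x : ℝ} (h : 1/2 ≤ x) (h1 : x ≤ 1) : saw x = 2 * (1 - x) := by
  unfold saw
  split_ifs <;> linarith

lemma sawIter_succ (s : ℕ) (x : ℝ) : sawIter (s + 1) x = sawIter s (saw x) := by
  induction s generalizing x with
  | zero => rfl
  | succ n ih =>
    show saw (sawIter (n + 1) x) = saw (sawIter n (saw x))
    rw [ih]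

lemma sawIter_eq (s : ℕ) (hs : 1 ≤ s) (x : ℝ) (hx : x ∈ Set.Icc (0:ℝ) 1) :
    sawIter s x = saw (Int.fract ((2:ℝ)^(s-1) * x)) := by
  induction s generalizing x with
  | zero => omega
  | succ n ih =>
    rcases Nat.lt_or_ge n 1 with hn | hn
    · interval_cases n
      show saw x = saw (Int.fract ((2:ℝ)^(1-1) * x))
      norm_num
      obtain ⟨h0, h1⟩ := hx
      rcases lt_or_eq_of_le h1 with h1' | h1'
      · rw [Int.fract_eq_self.mpr ⟨h0, h1'⟩]
      · subst h1'
        rw [show Int.fract (1:ℝ) = 0 by norm_num [Int.fract]]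
        rw [saw_eq_zero (Or.inr le_rfl), saw_eq_zero (Or.inl le_rfl)]
    · rw [sawIter_succ, ih hn (saw x) (saw_mem hx)]
      have hpow : (2:ℝ)^(n-1) * 2 = 2^n := by
        rw [← pow_succ]
        congr 1
        omega
      have hkey : saw (Int.fract ((2:ℝ)^(n-1) * saw x)) =
          saw (Int.fract ((2:ℝ)^n * x)) := by
        obtain ⟨h0, h1⟩ := hx
        rcases lt_or_ge x (1/2) with hc | hc
        · rw [saw_of_lt_half h0 hc,
            show (2:ℝ)^(n-1) * (2 * x) = 2^(n-1) * 2 * x by ring, hpow]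
        · rw [saw_of_ge_half hc h1]
          have heq : (2:ℝ)^(n-1) * (2 * (1 - x)) = -((2:ℝ)^n * x) + ((2^n : ℤ) : ℝ) := by
            push_cast
            rw [← hpow]; ring
          rw [heq, Int.fract_add_intCast]
          rcases eq_or_ne (Int.fract ((2:ℝ)^n * x)) 0 with hz | hz
          · rw [Int.fract_neg_eq_zero.mpr hz, hz]
          · rw [Int.fract_neg hz]
            exact saw_symm (Int.fract_nonneg _) (le_of_lt (Int.fract_lt_one _))
      rwa [show n + 1 - 1 = n by omega]

/-- For `f` continuous on `[0,1]` with `f 0 = 0` and every `s ≥ 1`, on `[0,1]`,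
`f(g_s(x)) = ∑_{k=0}^{2^{s-1}-1} f(g(2^{s-1} x - k))`, and the support of each summand
`x ↦ f(g(2^{s-1} x - k))` is contained in `(k/2^{s-1}, (k+1)/2^{s-1})`. -/
theorem f_sawtooth_decomposition (f : ℝ → ℝ) (hf : ContinuousOn f (Set.Icc 0 1))
    (hf0 : f 0 = 0) (s : ℕ) (hs : 1 ≤ s) :
    (∀ x ∈ Set.Icc (0:ℝ) 1,
      f (sawIter s x) = ∑ k ∈ Finset.range (2^(s-1)), f (saw ((2:ℝ)^(s-1) * x - k))) ∧
    (∀ k < 2^(s-1),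
      Function.support (fun x : ℝ => f (saw ((2:ℝ)^(s-1) * x - k))) ⊆
        Set.Ioo ((k:ℝ)/2^(s-1)) (((k:ℝ)+1)/2^(s-1))) := by
  set m := s - 1 with hm
  constructor
  · intro x hx
    obtain ⟨hx0, hx1⟩ := hx
    set t := (2:ℝ)^m * x with ht
    have ht0 : 0 ≤ t := by positivity
    have htle : t ≤ (2:ℝ)^m := by
      have : (0:ℝ) < 2^m := by positivity
      calc t = 2^m * x := rfl
        _ ≤ 2^m * 1 := by apply mul_le_mul_of_nonneg_left hx1 (le_of_lt this)
        _ = 2^m := by ring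
    rw [sawIter_eq s hs x ⟨hx0, hx1⟩]
    rcases lt_or_eq_of_le htle with hlt | heq
    · -- t < 2^m; the floor of t is the unique nonzero index
      set n : ℕ := ⌊t⌋₊ with hn
      have hfl : (n : ℝ) ≤ t := Nat.floor_le ht0
      have hflt : t < n + 1 := Nat.lt_floor_add_one t
      have hnm : n < 2^m := by
        rw [hn]
        apply (Nat.floor_lt ht0).mpr
        push_cast
        exact hlt
      have hfloor : ⌊t⌋ = (n : ℤ) := by
        rw [Int.floor_eq_iff]
        constructor <;> push_cast
        · exact hfl
        · exact hflt
      have hfr : Int.fract t = t - n := by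
        rw [Int.fract, hfloor]
        push_cast
        ring
      rw [Finset.sum_eq_single_of_mem n (Finset.mem_range.mpr hnm)]
      · rw [hfr]
      · intro k hk hkn
        rcases lt_or_gt_of_ne hkn with h | h
        · have : (1:ℝ) ≤ t - k := by
            have : (k:ℝ) + 1 ≤ n := by exact_mod_cast h
            linarith
          rw [saw_eq_zero (Or.inr this), hf0]
        · have : t - k ≤ 0 := by
            have : (n:ℝ) + 1 ≤ k := by exact_mod_cast h
            linarith
          rw [saw_eq_zero (Or.inl this), hf0]
    · -- t = 2^m, i.e. x = 1; everything vanishes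
      have hfr : Int.fract t = 0 := by
        rw [heq, show ((2:ℝ)^m) = (((2^m : ℤ)):ℝ) by push_cast; ring, Int.fract_intCast]
      rw [hfr, saw_eq_zero (Or.inl le_rfl), hf0]
      symm
      apply Finset.sum_eq_zero
      intro k hk
      have hk' : k < 2^m := Finset.mem_range.mp hk
      have : (1:ℝ) ≤ t - k := by
        have : (k:ℝ) + 1 ≤ 2^m := by exact_mod_cast hk'
        linarith [heq]
      rw [saw_eq_zero (Or.inr this), hf0]
  · intro k hk x hx
    have hsne : saw ((2:ℝ)^m * x - k) ≠ 0 := by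
      intro h
      apply hx
      simp only [h, hf0]
    obtain ⟨h1, h2⟩ := saw_pos_of_ne_zero hsne
    have hp : (0:ℝ) < 2^m := by positivity
    constructor
    · rw [div_lt_iff₀ hp]
      linarith [mul_comm ((2:ℝ)^m) x]
    · rw [lt_div_iff₀ hp]
      linarith [mul_comm ((2:ℝ)^m) x]
end

section
/- For every s ≥ 1, the s-order sawtooth function g_s: [0,1] → [0,1] can be realized by a ReLU neural network Φ: ℝ → ℝ with connectivity M(Φ) = 11s − 3 and depth L(Φ) = s + 1, i.e., Φ(x) = g_s(x) for all x ∈ [0,1]. -/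
open MeasureTheory Matrix

/-- A ReLU neural network with input dimension `din` and output dimension `dout`:
affine maps `W_ℓ x = A_ℓ x + b_ℓ` for layers `ℓ = 1, …, depth` (stored here with indices
`0, …, depth - 1`), with layer widths `width 0 = din, …, width depth = dout`. -/
structure ReLUNet (din dout : ℕ) where
  depth : ℕ
  depth_ge : 2 ≤ depth
  width : ℕ → ℕ
  width_in : width 0 = din
  width_out : width depth = dout
  A : (ℓ : ℕ) → Matrix (Fin (width (ℓ + 1))) (Fin (width ℓ)) ℝ
  b : (ℓ : ℕ) → Fin (width (ℓ + 1)) → ℝ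

namespace ReLUNet

variable {din dout : ℕ}

/-- The affine map of layer `ℓ`. -/
noncomputable def layer (Φ : ReLUNet din dout) (ℓ : ℕ) (x : Fin (Φ.width ℓ) → ℝ) :
    Fin (Φ.width (ℓ + 1)) → ℝ :=
  Φ.A ℓ *ᵥ x + Φ.b ℓ

/-- The output of the first `k` layers, with the ReLU activation applied after each layer. -/
noncomputable def hidden (Φ : ReLUNet din dout) :
    (k : ℕ) → (Fin (Φ.width 0) → ℝ) → Fin (Φ.width k) → ℝ
  | 0, x => x
  | k + 1, x => fun i => max ((Φ.layer k (Φ.hidden k x)) i) 0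

/-- The map `ℝ^din → ℝ^dout` realized by the network:
`Φ(x) = W_depth (ρ (W_{depth-1} (ρ (⋯ ρ (W_1 x)))))`, i.e. affine layers interleaved with
the ReLU activation `ρ`, with no activation after the last layer. -/
noncomputable def eval (Φ : ReLUNet din dout) (x : Fin din → ℝ) : Fin dout → ℝ := fun j =>
  Φ.layer (Φ.depth - 1) (Φ.hidden (Φ.depth - 1) (fun i => x (Fin.cast Φ.width_in i)))
    (Fin.cast (show dout = Φ.width (Φ.depth - 1 + 1) by
      rw [Nat.sub_add_cancel (le_trans one_le_two Φ.depth_ge), Φ.width_out]) j)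

open scoped Classical in
/-- The connectivity of the network: the total number of nonzero entries in the
weight matrices `A_ℓ` and bias vectors `b_ℓ`. -/
noncomputable def conn (Φ : ReLUNet din dout) : ℕ :=
  ∑ ℓ ∈ Finset.range Φ.depth,
    (((Finset.univ : Finset (Fin (Φ.width (ℓ+1)) × Fin (Φ.width ℓ))).filter
        (fun p => Φ.A ℓ p.1 p.2 ≠ 0)).card
      + ((Finset.univ : Finset (Fin (Φ.width (ℓ+1)))).filter (fun i => Φ.b ℓ i ≠ 0)).card)

end ReLUNet

/-!
On `[0, 1]` the sawtooth is a combination of three ReLUs placed at its breakpoints `0, 1/2, 1`,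
weighted by the jumps `2, -4, 2` of its slope: `g y = 2 ρ y - 4 ρ (y - 1/2) + 2 ρ (y - 1)`.
A hidden layer of three neurons computing `ρ (y - c)` thus carries `y` to `g y`, and since `g`
maps `[0, 1]` into itself, `s` such layers realize `g_s`. The output combination of one copy
merges with the input shift of the next into a single dense `3 × 3` layer with two nonzero
biases, so the connectivity is `(3 + 2) + 11 (s - 1) + 3 = 11 s - 3`.
-/

open Finset

namespace ReLUNet

variable {din dout : ℕ} (Φ : ReLUNet din dout)

theorem layer_apply (ℓ : ℕ) (v : Fin (Φ.width ℓ) → ℝ) (i : Fin (Φ.width (ℓ + 1))) :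
    Φ.layer ℓ v i = ∑ j, Φ.A ℓ i j * v j + Φ.b ℓ i := by
  simp [layer, mulVec, dotProduct]

open scoped Classical in
theorem conn_eq_of_forall_A_ne_zero (hA : ∀ ℓ i j, Φ.A ℓ i j ≠ 0) :
    Φ.conn = ∑ ℓ ∈ range Φ.depth,
      (Φ.width (ℓ + 1) * Φ.width ℓ + (univ.filter (fun i => Φ.b ℓ i ≠ 0)).card) := by
  refine sum_congr rfl fun ℓ _ => ?_
  rw [filter_true_of_mem fun p _ => hA ℓ p.1 p.2, card_univ, Fintype.card_prod,
    Fintype.card_fin, Fintype.card_fin]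

end ReLUNet

noncomputable def sawKnot (n : ℕ) : ℝ := if n = 1 then 1 / 2 else if n = 2 then 1 else 0

noncomputable def sawSlopeJump (n : ℕ) : ℝ := if n = 1 then -4 else 2

theorem sum_sawSlopeJump_mul_relu {y : ℝ} (hy : y ∈ Set.Icc (0 : ℝ) 1) :
    ∑ j ∈ range 3, sawSlopeJump j * max (y - sawKnot j) 0 = saw y := by
  obtain ⟨h0, h1⟩ := hy
  simp only [sum_range_succ, sum_range_zero, sawSlopeJump, sawKnot, saw]
  norm_num
  rcases lt_or_ge y (1 / 2) with h | h
  · rw [if_neg (not_lt.2 h0), if_pos h, max_eq_left h0, max_eq_right (by linarith),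
      max_eq_right (by linarith)]
    ring
  · rw [if_neg (not_lt.2 h0), if_neg (not_lt.2 h), if_pos h1, max_eq_left h0,
      max_eq_left (by linarith), max_eq_right (by linarith)]
    ring

theorem saw_mem_Icc_s10 {y : ℝ} (hy : y ∈ Set.Icc (0 : ℝ) 1) : saw y ∈ Set.Icc (0 : ℝ) 1 := by
  obtain ⟨h0, h1⟩ := hy
  unfold saw
  constructor <;> split_ifs <;> linarith

theorem sawIter_mem_Icc {x : ℝ} (hx : x ∈ Set.Icc (0 : ℝ) 1) (k : ℕ) :
    sawIter k x ∈ Set.Icc (0 : ℝ) 1 := by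
  induction k with
  | zero => exact hx
  | succ k ih => exact saw_mem_Icc_s10 ih

/-- Neuron `i` of hidden layer `k + 1` computes `ρ (g_k x - sawKnot i)`: each layer after the
first forms `g` of the previous value from the three ReLUs and shifts it by the knots again,
except the last, which applies no shift. -/
noncomputable def sawtoothNet (s : ℕ) (hs : 1 ≤ s) : ReLUNet 1 1 where
  depth := s + 1
  depth_ge := by omega
  width k := if k = 0 then 1 else if k ≤ s then 3 else 1
  width_in := rfl
  width_out := by simp
  A ℓ := Matrix.of fun _ j => if ℓ = 0 then 1 else sawSlopeJump j
  b ℓ i := if ℓ < s then -sawKnot i else 0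

namespace sawtoothNet

variable {s : ℕ} (hs : 1 ≤ s)

theorem depth_eq : (sawtoothNet s hs).depth = s + 1 := rfl

theorem width_zero : (sawtoothNet s hs).width 0 = 1 := rfl

theorem width_eq_three {k : ℕ} (h1 : 1 ≤ k) (h2 : k ≤ s) : (sawtoothNet s hs).width k = 3 := by
  simp [sawtoothNet, h2]
  omega

theorem width_depth : (sawtoothNet s hs).width (s + 1) = 1 := by
  simp [sawtoothNet]

theorem A_apply (ℓ : ℕ) (i j) :
    (sawtoothNet s hs).A ℓ i j = if ℓ = 0 then 1 else sawSlopeJump j := rfl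

theorem b_apply (ℓ : ℕ) (i) : (sawtoothNet s hs).b ℓ i = if ℓ < s then -sawKnot i else 0 := rfl

theorem layer_zero (x : ℝ) (i : Fin ((sawtoothNet s hs).width 1)) :
    (sawtoothNet s hs).layer 0 (fun _ => x) i = x - sawKnot i := by
  simp only [ReLUNet.layer_apply, A_apply, b_apply, if_true, one_mul, sum_const, card_univ,
    Fintype.card_fin]
  rw [width_zero, if_pos (Nat.lt_of_succ_le hs), one_smul, sub_eq_add_neg]

theorem layer_relu_sub_sawKnot {ℓ : ℕ} (hℓ : 1 ≤ ℓ) (hℓs : ℓ ≤ s) {y : ℝ}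
    (hy : y ∈ Set.Icc (0 : ℝ) 1) (i : Fin ((sawtoothNet s hs).width (ℓ + 1))) :
    (sawtoothNet s hs).layer ℓ (fun j => max (y - sawKnot j) 0) i
      = saw y + (sawtoothNet s hs).b ℓ i := by
  rw [ReLUNet.layer_apply, ← sum_sawSlopeJump_mul_relu hy, ← width_eq_three hs hℓ hℓs,
    ← Fin.sum_univ_eq_sum_range (fun j => sawSlopeJump j * max (y - sawKnot j) 0)]
  simp [A_apply, Nat.one_le_iff_ne_zero.1 hℓ]

theorem hidden_succ {x : ℝ} (hx : x ∈ Set.Icc (0 : ℝ) 1) {k : ℕ} (hk : k < s)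
    (i : Fin ((sawtoothNet s hs).width (k + 1))) :
    (sawtoothNet s hs).hidden (k + 1) (fun _ => x) i = max (sawIter k x - sawKnot i) 0 := by
  induction k with
  | zero => exact congrArg (max · 0) (layer_zero hs _ i)
  | succ k ih =>
    have hprev : (sawtoothNet s hs).hidden (k + 1) (fun _ => x)
        = fun j : Fin _ => max (sawIter k x - sawKnot j) 0 := funext (ih (by omega))
    rw [ReLUNet.hidden, hprev]
    beta_reduce
    rw [layer_relu_sub_sawKnot hs (by omega) (by omega) (sawIter_mem_Icc hx k), b_apply, if_pos hk,
      ← sub_eq_add_neg]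
    rfl

theorem eval_eq {x : ℝ} (hx : x ∈ Set.Icc (0 : ℝ) 1) :
    (sawtoothNet s hs).eval (fun _ => x) 0 = sawIter s x := by
  obtain ⟨t, rfl⟩ : ∃ t, s = t + 1 := ⟨s - 1, by omega⟩
  have hlast : (sawtoothNet (t + 1) hs).hidden (t + 1) (fun _ => x)
      = fun j : Fin _ => max (sawIter t x - sawKnot j) 0 :=
    funext (hidden_succ hs hx (Nat.lt_succ_self t))
  have hout : ∀ i, (sawtoothNet (t + 1) hs).layer (t + 1)
      ((sawtoothNet (t + 1) hs).hidden (t + 1) (fun _ => x)) i = sawIter (t + 1) x := by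
    intro i
    rw [hlast, layer_relu_sub_sawKnot hs (by omega) le_rfl (sawIter_mem_Icc hx t), b_apply,
      if_neg (lt_irrefl _), add_zero]
    rfl
  -- `eval` is `hout` at a cast output index, up to the defeq `t + 1 + 1 - 1 = t + 1`
  exact hout _

theorem A_ne_zero (ℓ : ℕ) (i j) : (sawtoothNet s hs).A ℓ i j ≠ 0 := by
  rw [A_apply, sawSlopeJump]
  split_ifs <;> norm_num

open scoped Classical in
theorem card_filter_b_ne_zero (ℓ : ℕ) :
    (univ.filter fun i => (sawtoothNet s hs).b ℓ i ≠ 0).card = if ℓ < s then 2 else 0 := by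
  by_cases hℓ : ℓ < s
  · simp only [card_filter, b_apply, if_pos hℓ]
    rw [Fin.sum_univ_eq_sum_range (fun n => if -sawKnot n ≠ 0 then 1 else 0),
      width_eq_three hs (by omega) hℓ]
    simp [sum_range_succ, sawKnot]
  · simp [b_apply, hℓ]

theorem conn_eq : (sawtoothNet s hs).conn = 11 * s - 3 := by
  rw [ReLUNet.conn_eq_of_forall_A_ne_zero _ (A_ne_zero hs)]
  simp only [card_filter_b_ne_zero]
  obtain ⟨t, rfl⟩ : ∃ t, s = t + 1 := ⟨s - 1, by omega⟩
  have hmid : ∀ ℓ ∈ range t, (sawtoothNet (t + 1) hs).width (ℓ + 1 + 1)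
      * (sawtoothNet (t + 1) hs).width (ℓ + 1) + (if ℓ + 1 < t + 1 then 2 else 0) = 11 := by
    intro ℓ hℓ
    rw [mem_range] at hℓ
    rw [width_eq_three hs (by omega) (by omega), width_eq_three hs (by omega) (by omega),
      if_pos (by omega)]
  rw [depth_eq, sum_range_succ, sum_range_succ', sum_congr rfl hmid, sum_const, card_range,
    smul_eq_mul, width_zero, width_depth, width_eq_three hs le_rfl (by omega),
    width_eq_three hs (k := t + 1) (by omega) le_rfl, if_pos (Nat.succ_pos t),
    if_neg (lt_irrefl _)]
  omega

end sawtoothNet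

/-- For every `s ≥ 1` the `s`-fold sawtooth function `g_s` is realized on
`[0,1]` by a ReLU network `Φ : ℝ → ℝ` with connectivity `11 s - 3` and depth `s + 1`. -/
theorem sawtooth_network (s : ℕ) (hs : 1 ≤ s) :
    ∃ Φ : ReLUNet 1 1, Φ.conn = 11 * s - 3 ∧ Φ.depth = s + 1 ∧
      ∀ x ∈ Set.Icc (0:ℝ) 1, Φ.eval (fun _ => x) 0 = sawIter s x :=
  ⟨sawtoothNet s hs, sawtoothNet.conn_eq hs, rfl, fun _ => sawtoothNet.eval_eq hs⟩
end
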